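/- arXiv:0911.2671 — 2 statements merged into one kernel-verified Lean document; each statement's English description precedes it below -/
import Mathlib

section
/- Arnol'd relation: for distinct indices i, j, k, the 2-forms ω_{ij} = d log(t_i - t_j) satisfy ω_{ij} ∧ ω_{jk} + ω_{jk} ∧ ω_{ki} + ω_{ki} ∧ ω_{ij} = 0. -/
/-- The logarithmic `1`-form `ω_{ab} = d log(t_a - t_b)` evaluated at the point `t` of the
hyperplane complement: the linear functional `v ↦ (v a - v b)/(t a - t b)`. -/
noncomputable def omegaForm {m : ℕ} (a b : Fin m) (t : Fin m → ℂ) : (Fin m → ℂ) → ℂ :=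
  fun v => (v a - v b) / (t a - t b)

/-- The wedge of two `1`-forms at a point, as an alternating bilinear `2`-form:
`(α ∧ β)(v, w) = α(v) β(w) - α(w) β(v)`. -/
def wedge {m : ℕ} (α β : (Fin m → ℂ) → ℂ) : (Fin m → ℂ) → (Fin m → ℂ) → ℂ :=
  fun v w => α v * β w - α w * β v

/-- Arnol'd's relation: for pairwise distinct indices `i, j, k` (at a point of the
complement of the hyperplanes `t_a = t_b`),
`ω_{ij} ∧ ω_{jk} + ω_{jk} ∧ ω_{ki} + ω_{ki} ∧ ω_{ij} = 0`. -/
theorem arnold_relation {m : ℕ} (i j k : Fin m) (hij : i ≠ j) (hjk : j ≠ k) (hki : k ≠ i)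
    (t : Fin m → ℂ) (htij : t i ≠ t j) (htjk : t j ≠ t k) (htki : t k ≠ t i)
    (v w : Fin m → ℂ) :
    wedge (omegaForm i j t) (omegaForm j k t) v w
      + wedge (omegaForm j k t) (omegaForm k i t) v w
      + wedge (omegaForm k i t) (omegaForm i j t) v w = 0 := by
  have h1 : t i - t j ≠ 0 := sub_ne_zero.mpr htij
  have h2 : t j - t k ≠ 0 := sub_ne_zero.mpr htjk
  have h3 : t k - t i ≠ 0 := sub_ne_zero.mpr htki
  simp only [wedge, omegaForm]
  field_simp
  ring
end

section
/- Shuffle vanishing for cell functions: let A and B be nonempty finite lists of pairwise distinct complex numbers (all entries of A distinct from all entries of B). For a list W = (w_1, ..., w_m) with distinct entries, define f(W) = ∏_{i=2}^{m} 1/(w_i - w_{i-1}). Then the sum of f(W) over all shuffles W of A and B equals 0. -/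
/-!
Putting a base point `x` in front of every shuffle, the sum factors:
`∑_W f(x W) = f(x A) · f(x B)`. This follows by induction on `|A| + |B|`, splitting the
shuffles of `a A` and `b B` by their first letter and using the partial fraction
`1/((a-x)(b-a)) + 1/((b-x)(a-b)) = 1/((a-x)(b-x))`. Splitting the shuffles in the theorem
the same way, with `a` resp. `b` as base point, gives `f(a A) f(b B) (1/(b-a) + 1/(a-b)) = 0`.
-/

/-- The list of all shuffles of two lists: interleavings preserving the relative order
of the entries of each list. -/
def shuffles {α : Type*} : List α → List α → List (List α)
  | [], B => [B]
  | a :: A, [] => [a :: A]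
  | a :: A, b :: B =>
      ((shuffles A (b :: B)).map (a :: ·)) ++ ((shuffles (a :: A) B).map (b :: ·))

/-- The cell function of a list `W = (w₁, …, w_m)`: `∏_{i=2}^m 1/(w_i - w_{i-1})`. -/
noncomputable def cellFun (W : List ℂ) : ℂ :=
  ((W.zip W.tail).map (fun p => (p.2 - p.1)⁻¹)).prod

lemma sum_map_shuffles_cons_cons {α M : Type*} [AddMonoid M] (f : List α → M)
    (a b : α) (A B : List α) :
    ((shuffles (a :: A) (b :: B)).map f).sum =
      ((shuffles A (b :: B)).map fun W => f (a :: W)).sum +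
        ((shuffles (a :: A) B).map fun W => f (b :: W)).sum := by
  simp [shuffles, Function.comp_def]

@[simp]
lemma cellFun_singleton (x : ℂ) : cellFun [x] = 1 := by simp [cellFun]

lemma cellFun_cons_cons (x w : ℂ) (W : List ℂ) :
    cellFun (x :: w :: W) = (w - x)⁻¹ * cellFun (w :: W) := by
  simp [cellFun]

theorem sum_shuffles_cellFun_cons : ∀ (A B : List ℂ) (x : ℂ), (x :: (A ++ B)).Nodup →
    ((shuffles A B).map fun W => cellFun (x :: W)).sum = cellFun (x :: A) * cellFun (x :: B)
  | [], B, x, _ => by simp [shuffles]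
  | a :: A, [], x, _ => by simp [shuffles]
  | a :: A, b :: B, x, hnd => by
    have hnd_a : (a :: (A ++ b :: B)).Nodup := by simpa using hnd.of_cons
    have hnd_b : (b :: (a :: A ++ B)).Nodup := (List.perm_middle.nodup_iff).mp hnd.of_cons
    have hxa : a - x ≠ 0 := sub_ne_zero.mpr fun h => by simp_all
    have hxb : b - x ≠ 0 := sub_ne_zero.mpr fun h => by simp_all
    have hab : a - b ≠ 0 := sub_ne_zero.mpr fun h => by simp_all
    have partial_fractions :
        (a - x)⁻¹ * (b - a)⁻¹ + (b - x)⁻¹ * (a - b)⁻¹ = (a - x)⁻¹ * (b - x)⁻¹ := by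
      have hba : b - a ≠ 0 := by rwa [← neg_sub, neg_ne_zero]
      field_simp
      ring
    simp only [sum_map_shuffles_cons_cons, cellFun_cons_cons x, List.sum_map_mul_left]
    rw [sum_shuffles_cellFun_cons A (b :: B) a hnd_a,
      sum_shuffles_cellFun_cons (a :: A) B b hnd_b, cellFun_cons_cons a b, cellFun_cons_cons b a]
    linear_combination (cellFun (a :: A) * cellFun (b :: B)) * partial_fractions
termination_by A B => A.length + B.length

/-- Shuffle vanishing for cell functions: for nonempty lists `A`, `B` of pairwise
distinct complex numbers, the sum of the cell function over all shuffles of `A` and `B`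
vanishes. -/
theorem shuffle_sum_cellFun_eq_zero (A B : List ℂ) (hA : A ≠ []) (hB : B ≠ [])
    (hnd : (A ++ B).Nodup) :
    ((shuffles A B).map cellFun).sum = 0 := by
  obtain ⟨a, A, rfl⟩ := List.exists_cons_of_ne_nil hA
  obtain ⟨b, B, rfl⟩ := List.exists_cons_of_ne_nil hB
  have hnd_a : (a :: (A ++ b :: B)).Nodup := by simpa using hnd
  have hnd_b : (b :: (a :: A ++ B)).Nodup := List.perm_middle.nodup_iff.mp hnd
  have hab : a - b ≠ 0 := sub_ne_zero.mpr fun h => by simp_all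
  have inv_sub_cancel : (b - a)⁻¹ + (a - b)⁻¹ = 0 := by
    rw [← neg_sub, inv_neg, neg_add_cancel]
  rw [sum_map_shuffles_cons_cons, sum_shuffles_cellFun_cons A (b :: B) a hnd_a,
    sum_shuffles_cellFun_cons (a :: A) B b hnd_b, cellFun_cons_cons a b, cellFun_cons_cons b a]
  linear_combination (cellFun (a :: A) * cellFun (b :: B)) * inv_sub_cancel
end
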